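/- Let n be an even positive integer and let h, k be nonnegative integers. Then, in ℤ[q], D_q(h+n, k+n) ≡ D_q(h+n, k) + D_q(h, k+n) − D_q(h, k) (mod Φ_n(q)). -/

import Mathlib

open Polynomial Finset

/-- The Gaussian (q-)binomial coefficient `[h choose k]_q` as a polynomial in `ℤ[q]`,
defined via the q-Pascal recurrence; it equals
`([h]_q [h−1]_q ⋯ [h−k+1]_q)/([k]_q ⋯ [1]_q)`. -/
noncomputable def qBinom : ℕ → ℕ → Polynomial ℤ
  | _, 0 => 1
  | 0, _ + 1 => 0
  | h + 1, k + 1 => qBinom h k + Polynomial.X ^ (k + 1) * qBinom h (k + 1)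

/-- The q-Delannoy number `D_q(h,k) = Σ_{j=0}^{h} q^{binom(j+1,2)} [k choose j]_q
[h+k−j choose k]_q`. -/
noncomputable def qDelannoy (h k : ℕ) : Polynomial ℤ :=
  ∑ j ∈ Finset.range (h + 1),
    Polynomial.X ^ ((j + 1).choose 2) * qBinom k j * qBinom (h + k - j) k

/-- The Delannoy number `D(h,k) = Σ_{j=0}^{h} binom(k,j) binom(h+k−j,k)`. -/
def delannoy (h k : ℕ) : ℕ :=
  ∑ j ∈ Finset.range (h + 1), k.choose j * (h + k - j).choose k

/-!
Since `Φ_n` is the minimal polynomial over `ℤ` of a primitive `n`-th root of unity `ζ`, it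
suffices to prove the identity after evaluating at `ζ`, which we do in any domain. There
`[n choose b]` vanishes for `0 < b < n`, and Pascal's rule gives the q-Lucas steps
`[a+n choose b] = [a choose b]` for `b < n` and `[a+n choose b+n] = [a choose b+n] + [a choose b]`.
Applied to the second factor of the summands of `D(h+n, k+n)`, they give `D(h, k+n)` plus a
cross sum; applied to its first factor `[k+n choose j]`, the cross sum becomes `D(h+n, k)` plus
the terms with `j ≥ n`, which add up to `-D(h, k)` because `ζ^(n choose 2) = -1` for even `n`.
-/

lemma qBinom_zero_right (h : ℕ) : qBinom h 0 = 1 := by cases h <;> rfl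

lemma qBinom_zero_succ (k : ℕ) : qBinom 0 (k + 1) = 0 := rfl

lemma qBinom_succ_succ (h k : ℕ) :
    qBinom (h + 1) (k + 1) = qBinom h k + X ^ (k + 1) * qBinom h (k + 1) := rfl

lemma qBinom_eq_zero_of_lt {h k : ℕ} (hk : h < k) : qBinom h k = 0 := by
  induction h generalizing k with
  | zero => obtain ⟨k, rfl⟩ := Nat.exists_eq_succ_of_ne_zero hk.ne'; rfl
  | succ h ih =>
    obtain ⟨k, rfl⟩ := Nat.exists_eq_succ_of_ne_zero (by omega : k ≠ 0)
    rw [qBinom_succ_succ, ih (by omega), ih (by omega), mul_zero, add_zero]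

lemma qBinom_self (h : ℕ) : qBinom h h = 1 := by
  induction h with
  | zero => rfl
  | succ h ih => rw [qBinom_succ_succ, ih, qBinom_eq_zero_of_lt h.lt_succ_self, mul_zero, add_zero]

lemma one_sub_X_pow_mul_qBinom_succ_succ (h k : ℕ) :
    (1 - X ^ (k + 1)) * qBinom (h + 1) (k + 1) = (1 - X ^ (h + 1)) * qBinom h k := by
  induction h generalizing k with
  | zero =>
    cases k with
    | zero => simp [qBinom_succ_succ, qBinom_zero_right, qBinom_zero_succ]
    | succ k => simp [qBinom_succ_succ, qBinom_zero_succ]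
  | succ h ih =>
    cases k with
    | zero =>
      have := ih 0
      rw [qBinom_zero_right, mul_one] at this
      rw [qBinom_succ_succ (h + 1), qBinom_zero_right]
      linear_combination X * this
    | succ k =>
      rw [qBinom_succ_succ (h + 1)]
      linear_combination
        X ^ (k + 2) * ih (k + 1) + X * ih k + (X ^ (h + 2) - X) * qBinom_succ_succ h k

lemma qDelannoy_eq_sum_range (h k : ℕ) {N : ℕ} (hN : h + 1 ≤ N) :
    qDelannoy h k =
      ∑ j ∈ range N, X ^ (j + 1).choose 2 * qBinom k j * qBinom (h + k - j) k := by
  refine sum_subset (range_subset_range.mpr hN) fun j _ hj => ?_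
  rw [mem_range, not_lt] at hj
  rcases le_or_gt j k with hjk | hjk
  · rw [qBinom_eq_zero_of_lt (by omega : h + k - j < k), mul_zero]
  · rw [qBinom_eq_zero_of_lt hjk, mul_zero, zero_mul]

lemma Nat.add_choose_two (a b : ℕ) : (a + b).choose 2 = a.choose 2 + b.choose 2 + a * b := by
  induction b with
  | zero => simp
  | succ b ih =>
    rw [← add_assoc, Nat.choose_succ_succ', Nat.choose_succ_succ' b, ih, Nat.choose_one_right,
      Nat.choose_one_right]
    ring

namespace IsPrimitiveRoot

variable {R : Type*} [CommRing R] [IsDomain R] {ζ : R} {n : ℕ}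

lemma aeval_qBinom_self_eq_zero (hζ : IsPrimitiveRoot ζ n) {b : ℕ} (hb : 0 < b) (hbn : b < n) :
    aeval ζ (qBinom n b) = 0 := by
  obtain ⟨b, rfl⟩ := Nat.exists_eq_add_one_of_ne_zero hb.ne'
  obtain ⟨m, rfl⟩ := Nat.exists_eq_add_one_of_ne_zero (by omega : n ≠ 0)
  have h := congrArg (aeval ζ) (one_sub_X_pow_mul_qBinom_succ_succ m b)
  simp only [map_mul, map_sub, map_one, map_pow, aeval_X, hζ.pow_eq_one, sub_self,
    zero_mul] at h
  have hζb : 1 - ζ ^ (b + 1) ≠ 0 :=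
    sub_ne_zero.mpr (hζ.pow_ne_one_of_pos_of_lt hb.ne' hbn).symm
  exact (mul_eq_zero.mp h).resolve_left hζb

lemma aeval_qBinom_add_of_lt (hζ : IsPrimitiveRoot ζ n) (a : ℕ) {b : ℕ} (hb : b < n) :
    aeval ζ (qBinom (a + n) b) = aeval ζ (qBinom a b) := by
  induction a generalizing b with
  | zero =>
    rcases Nat.eq_zero_or_pos b with rfl | hb0
    · simp only [qBinom_zero_right]
    · obtain ⟨b, rfl⟩ := Nat.exists_eq_add_one_of_ne_zero hb0.ne'
      rw [zero_add, hζ.aeval_qBinom_self_eq_zero hb0 hb, qBinom_zero_succ, map_zero]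
  | succ a ih =>
    cases b with
    | zero => simp only [qBinom_zero_right]
    | succ b =>
      rw [add_right_comm, qBinom_succ_succ, qBinom_succ_succ]
      simp only [map_add, map_mul, ih (by omega : b < n), ih hb]

lemma aeval_qBinom_add_add (hζ : IsPrimitiveRoot ζ n) (hn : 0 < n) (a b : ℕ) :
    aeval ζ (qBinom (a + n) (b + n)) = aeval ζ (qBinom a (b + n)) + aeval ζ (qBinom a b) := by
  obtain ⟨m, rfl⟩ := Nat.exists_eq_add_one_of_ne_zero hn.ne'
  induction a generalizing b with
  | zero =>
    rw [qBinom_eq_zero_of_lt (by omega : 0 < b + (m + 1)), map_zero, zero_add, zero_add]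
    cases b with
    | zero => simp only [zero_add, qBinom_self]
    | succ b => rw [qBinom_eq_zero_of_lt (by omega), qBinom_zero_succ]
  | succ a ih =>
    rw [add_right_comm a 1]
    cases b with
    | zero =>
      have := ih 0
      simp only [zero_add, qBinom_succ_succ, qBinom_zero_right, map_add, map_mul, map_pow,
        aeval_X, hζ.pow_eq_one, one_mul, hζ.aeval_qBinom_add_of_lt a m.lt_add_one] at this ⊢
      rw [this]
      ring
    | succ b =>
      rw [add_right_comm b 1, qBinom_succ_succ, qBinom_succ_succ a (b + (m + 1)),
        qBinom_succ_succ a b, show b + (m + 1) + 1 = b + 1 + (m + 1) by omega]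
      simp only [map_add, map_mul, map_pow, aeval_X, ih, pow_add ζ (b + 1), hζ.pow_eq_one]
      ring

lemma pow_choose_two_of_even (hζ : IsPrimitiveRoot ζ n) (hn : 0 < n) (heven : Even n) :
    ζ ^ n.choose 2 = -1 := by
  obtain ⟨m, rfl⟩ := heven
  have hm : m ≠ 0 := by omega
  have hζm : IsPrimitiveRoot (ζ ^ m) 2 := by
    have := hζ.pow_of_dvd hm ⟨2, by ring⟩
    rwa [← two_mul, Nat.mul_div_cancel _ (Nat.pos_of_ne_zero hm)] at this
  have hchoose : (m + m).choose 2 = m * (2 * (m - 1) + 1) := by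
    rw [Nat.choose_two_right, show m + m - 1 = 2 * (m - 1) + 1 by omega, ← two_mul, mul_assoc,
      Nat.mul_div_cancel_left _ two_pos]
  rw [hchoose, pow_mul, hζm.eq_neg_one_of_two_right, (odd_two_mul_add_one (m - 1)).neg_one_pow]

lemma pow_add_choose_two_of_even (hζ : IsPrimitiveRoot ζ n) (hn : 0 < n) (heven : Even n)
    (i : ℕ) : ζ ^ (n + i).choose 2 = -ζ ^ i.choose 2 := by
  rw [Nat.add_choose_two, pow_add, pow_add, hζ.pow_choose_two_of_even hn heven, pow_mul,
    hζ.pow_eq_one, one_pow]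
  ring

lemma aeval_qDelannoy_add_add (hζ : IsPrimitiveRoot ζ n) (hn : 0 < n) (h k : ℕ) :
    aeval ζ (qDelannoy (h + n) (k + n)) = aeval ζ (qDelannoy h (k + n)) +
      ∑ j ∈ range (h + n + 1),
        aeval ζ (X ^ (j + 1).choose 2 * qBinom (k + n) j * qBinom (h + (k + n) - j) k) := by
  rw [qDelannoy, qDelannoy_eq_sum_range h (k + n) (by omega : h + 1 ≤ h + n + 1), map_sum,
    map_sum, ← sum_add_distrib]
  refine sum_congr rfl fun j hj => ?_
  rw [mem_range] at hj
  rw [show h + n + (k + n) - j = h + (k + n) - j + n by omega]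
  simp only [map_mul, hζ.aeval_qBinom_add_add hn]
  ring

lemma aeval_sum_qBinom_add_mul_qBinom (hζ : IsPrimitiveRoot ζ n) (hn : 0 < n) (heven : Even n)
    (h k : ℕ) :
    ∑ j ∈ range (h + n + 1),
        aeval ζ (X ^ (j + 1).choose 2 * qBinom (k + n) j * qBinom (h + (k + n) - j) k) =
      aeval ζ (qDelannoy (h + n) k) - aeval ζ (qDelannoy h k) := by
  have hlow : ∀ j ∈ range n,
      aeval ζ (X ^ (j + 1).choose 2 * qBinom (k + n) j * qBinom (h + (k + n) - j) k) =
        aeval ζ (X ^ (j + 1).choose 2 * qBinom k j * qBinom (h + n + k - j) k) := by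
    intro j hj
    rw [mem_range] at hj
    simp only [map_mul, hζ.aeval_qBinom_add_of_lt k hj, show h + (k + n) = h + n + k by omega]
  have hhigh : ∀ i ∈ range (h + 1),
      aeval ζ (X ^ (n + i + 1).choose 2 * qBinom (k + n) (n + i) *
          qBinom (h + (k + n) - (n + i)) k) =
        aeval ζ (X ^ (n + i + 1).choose 2 * qBinom k (n + i) * qBinom (h + n + k - (n + i)) k) -
          aeval ζ (X ^ (i + 1).choose 2 * qBinom k i * qBinom (h + k - i) k) := by
    intro i _
    simp only [map_mul, map_pow, aeval_X]
    rw [show h + (k + n) - (n + i) = h + k - i by omega,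
      show h + n + k - (n + i) = h + k - i by omega, add_assoc,
      hζ.pow_add_choose_two_of_even hn heven, add_comm n i, hζ.aeval_qBinom_add_add hn]
    ring
  rw [qDelannoy, qDelannoy, map_sum, map_sum, show h + n + 1 = n + (h + 1) by omega,
    sum_range_add _ n (h + 1), sum_range_add _ n (h + 1), sum_congr rfl hlow, sum_congr rfl hhigh,
    sum_sub_distrib]
  ring

end IsPrimitiveRoot

theorem qDelannoy_step_even (n : ℕ) (hn : 0 < n) (heven : Even n) (h k : ℕ) :
    Polynomial.cyclotomic n ℤ ∣
      qDelannoy (h + n) (k + n) -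
        (qDelannoy (h + n) k + qDelannoy h (k + n) - qDelannoy h k) := by
  have hζ := Complex.isPrimitiveRoot_exp n hn.ne'
  rw [cyclotomic_eq_minpoly hζ hn, ← minpoly.isIntegrallyClosed_dvd_iff (hζ.isIntegral hn)]
  simp only [map_sub, map_add]
  rw [hζ.aeval_qDelannoy_add_add hn, hζ.aeval_sum_qBinom_add_mul_qBinom hn heven]
  ring
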